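/- Consider sequences (m_0, m_1, ..., m_{n-1}) of positive integers with m_{n-1} = 1 generated backwards by the rules: m_i = m_{i+1}, or m_i = (j−i)·m_{i+1} when m_{i+1} = ... = m_j (case of a maximal straight path followed by a curved edge), or m_i = m_j + (j−i−1)·m_{i+1} (straight case), as in an Enriques diagram of complexity n. Then m_0 ≤ F_n, where F_n is the n-th Fibonacci number, and the bound F_n is attained. -/

import Mathlib

/-- Symbols of Enriques diagrams: `Sum.inl k` is the vertex `v_k`,
`Sum.inr k` is the edge `e_k`. -/
abbrev ESym : Type := ℕ ⊕ ℕ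

def vtx (k : ℕ) : ESym := Sum.inl k
def edg (k : ℕ) : ESym := Sum.inr k

/-- The set `S_n = {v_2,…,v_{n-2}, e_2,…,e_{n-2}}` of undetermined symbols. -/
def symbols (n : ℕ) : Finset ESym :=
  ((Finset.Icc 2 (n - 2)).image vtx) ∪ ((Finset.Icc 2 (n - 2)).image edg)

/-- A code of an Enriques diagram of complexity `n`: a subset `χ ⊆ S_n` such that
`v_i ∈ χ` implies `e_i ∈ χ` and (`e_{i+1} ∈ χ` or `i = n-2`). -/
def IsCode (n : ℕ) (χ : Finset ESym) : Prop :=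
  χ ⊆ symbols n ∧
    ∀ i ∈ Finset.Icc 2 (n - 2), vtx i ∈ χ →
      edg i ∈ χ ∧ (edg (i + 1) ∈ χ ∨ i = n - 2)

instance (n : ℕ) : DecidablePred (IsCode n) := fun χ => by
  unfold IsCode; infer_instance

/-- The length of the maximal straight run of edges `e_{i+2}, e_{i+3}, …`
starting after the vertex `v_{i+1}` (edges must be straight, i.e. equal to
`e_{n-1}` or in `χ`, and the interior vertices must be neutral). -/
def runLen (n : ℕ) (χ : Finset ESym) (i : ℕ) : ℕ :=
  Nat.findGreatest
    (fun r => ∀ d < r,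
      ((i + 2 + d = n - 1 ∨ edg (i + 2 + d) ∈ χ) ∧
        (1 ≤ d → vtx (i + 1 + d) ∉ χ))) n

/-- The multiplicity sequence of the Enriques diagram with code `χ` of
complexity `n`, computed backwards from `m_{n-1} = 1` by the rules of the
paper: if a maximal straight path `[v_{i+1} v_j]` starts at `v_{i+1}` (i.e.
`e_{i+2}` is straight and either `e_{i+1}` is curved or `v_{i+1}` is breaking)
then `m_i = Σ_{k=i+1}^{j} m_k`, and otherwise `m_i = m_{i+1}`. -/
def mult (n : ℕ) (χ : Finset ESym) (i : ℕ) : ℕ :=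
  if h : n - 1 ≤ i then 1
  else
    if ((i + 2 = n - 1 ∨ edg (i + 2) ∈ χ) ∧
        ((¬(i + 1 = n - 1 ∨ edg (i + 1) ∈ χ)) ∨ vtx (i + 1) ∈ χ)) then
      ∑ k ∈ (Finset.Icc (i + 1) (i + 1 + runLen n χ i)).attach, mult n χ k.1
    else mult n χ (i + 1)
termination_by n - i
decreasing_by
  · have hk := (Finset.mem_Icc.mp k.2).1
    omega
  · omega

/-!
Along a maximal straight path `[v_{i+1} v_{i+r+1}]` the multiplicities are constant, so the
defining sum collapses to `m_i = r m_{i+r} + m_{i+r+1}`. By induction from the end,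
`m_i ≤ r F_{s+1} + F_s ≤ F_{s+r+1} = F_{n-i}` with `s = n - i - r - 1`. Taking every symbol
of `S_n` makes every straight path a single edge, and then `m_i = m_{i+1} + m_{i+2}`
is the Fibonacci recursion itself.
-/

lemma mul_fib_succ_add_fib_le (r s : ℕ) :
    r * Nat.fib (s + 1) + Nat.fib s ≤ Nat.fib (s + r + 1) := by
  induction r with
  | zero => simpa using Nat.fib_mono (Nat.le_succ s)
  | succ r ih =>
    rcases Nat.eq_zero_or_pos r with rfl | hr
    · rw [show s + (0 + 1) + 1 = s + 2 by omega, Nat.fib_add_two]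
      omega
    · have hmono : Nat.fib (s + 1) ≤ Nat.fib (s + r) := Nat.fib_mono (by omega)
      calc (r + 1) * Nat.fib (s + 1) + Nat.fib s
          = (r * Nat.fib (s + 1) + Nat.fib s) + Nat.fib (s + 1) := by ring
        _ ≤ Nat.fib (s + r + 1) + Nat.fib (s + r) := by omega
        _ = Nat.fib (s + (r + 1) + 1) := by
          rw [show s + (r + 1) + 1 = s + r + 2 by omega, Nat.fib_add_two, add_comm]

section Multiplicity

variable {n : ℕ} {χ : Finset ESym} {i : ℕ}

@[simp]
lemma vtx_mem_symbols {k : ℕ} : vtx k ∈ symbols n ↔ 2 ≤ k ∧ k ≤ n - 2 := by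
  simp [symbols, vtx, edg]

@[simp]
lemma edg_mem_symbols {k : ℕ} : edg k ∈ symbols n ↔ 2 ≤ k ∧ k ≤ n - 2 := by
  simp [symbols, vtx, edg]

def IsStraightEdge (n : ℕ) (χ : Finset ESym) (k : ℕ) : Prop :=
  k = n - 1 ∨ edg k ∈ χ

/-- A maximal straight path starts at `v_{i+1}`: the condition of the first branch of `mult`. -/
def StartsRun (n : ℕ) (χ : Finset ESym) (i : ℕ) : Prop :=
  IsStraightEdge n χ (i + 2) ∧ (¬IsStraightEdge n χ (i + 1) ∨ vtx (i + 1) ∈ χ)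

lemma mult_of_le (h : n - 1 ≤ i) : mult n χ i = 1 := by
  rw [mult, dif_pos h]

lemma mult_of_not_startsRun (hi : i < n - 1) (h : ¬StartsRun n χ i) :
    mult n χ i = mult n χ (i + 1) := by
  rw [mult, dif_neg (by omega)]
  exact if_neg h

lemma mult_of_startsRun (hi : i < n - 1) (h : StartsRun n χ i) :
    mult n χ i = ∑ k ∈ Finset.Icc (i + 1) (i + 1 + runLen n χ i), mult n χ k := by
  rw [mult, dif_neg (by omega)]
  exact (if_pos h).trans (Finset.sum_attach _ _)

lemma runLen_spec {d : ℕ} (hd : d < runLen n χ i) :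
    IsStraightEdge n χ (i + 2 + d) ∧ (1 ≤ d → vtx (i + 1 + d) ∉ χ) :=
  Nat.findGreatest_spec (P := fun r => ∀ d < r, (i + 2 + d = n - 1 ∨ edg (i + 2 + d) ∈ χ) ∧
    (1 ≤ d → vtx (i + 1 + d) ∉ χ)) (Nat.zero_le n) (fun _ h => absurd h (Nat.not_lt_zero _)) d hd

lemma one_le_runLen (hn : n ≠ 0) (h : StartsRun n χ i) : 1 ≤ runLen n χ i :=
  Nat.le_findGreatest (Nat.one_le_iff_ne_zero.mpr hn) fun d hd => by
    obtain rfl : d = 0 := by omega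
    exact ⟨h.1, by omega⟩

lemma runLen_add_two_le (hχ : χ ⊆ symbols n) (hn : n ≠ 0) (h : StartsRun n χ i) :
    i + runLen n χ i + 2 ≤ n := by
  have hr := one_le_runLen hn h
  rcases (runLen_spec (show runLen n χ i - 1 < runLen n χ i by omega)).1 with hend | hedge
  · omega
  · have := (edg_mem_symbols.mp (hχ hedge)).2
    omega

lemma not_startsRun_of_lt_runLen {k : ℕ} (hik : i < k) (hk : k < i + runLen n χ i) :
    ¬StartsRun n χ k := by
  have hstraight := (runLen_spec (show k - i - 1 < runLen n χ i by omega)).1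
  have hneutral := (runLen_spec (show k - i < runLen n χ i by omega)).2 (by omega)
  rw [show i + 2 + (k - i - 1) = k + 1 by omega] at hstraight
  rw [show i + 1 + (k - i) = k + 1 by omega] at hneutral
  rintro ⟨-, hcurved | hbreaking⟩
  exacts [hcurved hstraight, hneutral hbreaking]

lemma mult_eq_of_mem_run {k : ℕ} (hk : k ∈ Finset.Icc (i + 1) (i + runLen n χ i)) :
    mult n χ k = mult n χ (i + runLen n χ i) := by
  rw [Finset.mem_Icc] at hk
  obtain ⟨hik, hkr⟩ := hk
  induction hkr using Nat.decreasingInduction with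
  | self => rfl
  | of_succ k hk ih =>
    rw [← ih (by omega)]
    by_cases hkn : n - 1 ≤ k
    · rw [mult_of_le hkn, mult_of_le (by omega)]
    · exact mult_of_not_startsRun (by omega) (not_startsRun_of_lt_runLen (by omega) hk)

lemma mult_eq_of_startsRun (hi : i < n - 1) (h : StartsRun n χ i) :
    mult n χ i = runLen n χ i * mult n χ (i + runLen n χ i) +
      mult n χ (i + runLen n χ i + 1) := by
  rw [mult_of_startsRun hi h, add_right_comm,
    Finset.sum_Icc_succ_top (by omega), Finset.sum_congr rfl fun k hk => mult_eq_of_mem_run hk,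
    Finset.sum_const, Nat.card_Icc, smul_eq_mul, Nat.add_sub_add_right, Nat.add_sub_cancel_left]

lemma mult_le_fib (hχ : χ ⊆ symbols n) (hi : i < n) :
    mult n χ i ≤ Nat.fib (n - i) := by
  induction hlen : n - i using Nat.strong_induction_on generalizing i with
  | _ t ih =>
  subst hlen
  have ih' : ∀ j, i < j → j < n → mult n χ j ≤ Nat.fib (n - j) :=
    fun j hij hj => ih _ (by omega) hj rfl
  by_cases hend : n - 1 ≤ i
  · rw [mult_of_le hend, show n - i = 1 by omega, Nat.fib_one]
  by_cases hrun : StartsRun n χ i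
  · set r := runLen n χ i
    have hrn : i + r + 2 ≤ n := runLen_add_two_le hχ (by omega) hrun
    have hr := one_le_runLen (by omega) hrun
    calc mult n χ i = r * mult n χ (i + r) + mult n χ (i + r + 1) :=
          mult_eq_of_startsRun (by omega) hrun
      _ ≤ r * Nat.fib (n - (i + r + 1) + 1) + Nat.fib (n - (i + r + 1)) := by
          gcongr
          · exact (ih' _ (by omega) (by omega)).trans_eq (congrArg _ (by omega))
          · exact ih' _ (by omega) (by omega)
      _ ≤ Nat.fib (n - (i + r + 1) + r + 1) := mul_fib_succ_add_fib_le _ _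
      _ = Nat.fib (n - i) := congrArg _ (by omega)
  · rw [mult_of_not_startsRun (by omega) hrun]
    exact (ih' _ (by omega) (by omega)).trans (Nat.fib_mono (by omega))

end Multiplicity

section Symbols

variable {n i : ℕ}

lemma startsRun_symbols (h : i + 3 ≤ n) : StartsRun n (symbols n) i := by
  simp only [StartsRun, IsStraightEdge, edg_mem_symbols, vtx_mem_symbols]
  omega

lemma runLen_symbols (h : i + 3 ≤ n) : runLen n (symbols n) i = 1 := by
  refine le_antisymm (not_lt.mp fun hlt => ?_) (one_le_runLen (by omega) (startsRun_symbols h))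
  have := runLen_spec hlt
  simp only [IsStraightEdge, edg_mem_symbols, vtx_mem_symbols] at this
  omega

lemma mult_symbols (hi : i < n) : mult n (symbols n) i = Nat.fib (n - i) := by
  induction hlen : n - i using Nat.strong_induction_on generalizing i with
  | _ t ih =>
  subst hlen
  have ih' : ∀ j, i < j → j < n → mult n (symbols n) j = Nat.fib (n - j) :=
    fun j hij hj => ih _ (by omega) hj rfl
  by_cases hend : n - 1 ≤ i
  · rw [mult_of_le hend, show n - i = 1 by omega, Nat.fib_one]
  by_cases hlast : i + 2 = n
  · have hrun : ¬StartsRun n (symbols n) i := by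
      simp only [StartsRun, IsStraightEdge, edg_mem_symbols]
      omega
    rw [mult_of_not_startsRun (by omega) hrun, mult_of_le (by omega), ← hlast,
      Nat.add_sub_cancel_left, Nat.fib_two]
  · have h3 : i + 3 ≤ n := by omega
    rw [mult_eq_of_startsRun (by omega) (startsRun_symbols h3), runLen_symbols h3, one_mul,
      ih' _ (by omega) (by omega), ih' _ (by omega) (by omega),
      show n - i = n - (i + 1 + 1) + 2 by omega, Nat.fib_add_two, add_comm,
      show n - (i + 1 + 1) + 1 = n - (i + 1) by omega]

end Symbols

lemma isCode_symbols (n : ℕ) : IsCode n (symbols n) := by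
  refine ⟨subset_rfl, fun i hi _ => ?_⟩
  rw [Finset.mem_Icc] at hi
  simp only [edg_mem_symbols]
  omega

/-- The maximal initial multiplicity `m_0` over all Enriques diagrams of
complexity `n` is the Fibonacci number `F_n`, and it is attained. -/
theorem stmt16 (n : ℕ) (hn : 3 ≤ n) :
    (∀ χ : Finset ESym, IsCode n χ → mult n χ 0 ≤ Nat.fib n) ∧
    (∃ χ : Finset ESym, IsCode n χ ∧ mult n χ 0 = Nat.fib n) :=
  ⟨fun χ hχ => mult_le_fib hχ.1 (by omega),
    ⟨symbols n, isCode_symbols n, mult_symbols (by omega)⟩⟩
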